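/- Let φ = C_1 ∧ … ∧ C_m be a Boolean formula in conjunctive normal form over variables X_1, …, X_n with m ≥ 1 and each clause nonempty. Then φ is satisfiable if and only if (G_φ, C_1) has a pure Nash equilibrium with expected payoff ≥ 1 for player 0. -/

import Mathlib

open MeasureTheory Filter

noncomputable section

instance : Fact ((0:ℝ) < 1) := ⟨one_pos⟩

/-- The source of randomness used to run strategies: a countable product of circle groups,
which is a compact group, equipped below with its normalised Haar measure.  Under this
measure the coordinates (read as reals in `[0,1)`) are i.i.d. uniform random variables. -/
abbrev USpace : Type := ℕ → AddCircle (1:ℝ)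

/-- The normalised Haar (probability) measure on `USpace`. -/
def uHaar : Measure USpace :=
  ((Measure.addHaar (G := USpace)) Set.univ)⁻¹ • Measure.addHaar

/-- The `n`-th uniform coordinate, as a real number in `[0,1)`. -/
def coordReal (u : USpace) (n : ℕ) : ℝ := ((AddCircle.equivIco 1 0) (u n) : ℝ)

/-- A concurrent game with players `P`, states `S` and actions `A` (all finite and nonempty):
each player `i` has a nonempty set `act i s` of actions available at each state `s`, there is a
transition function `tr` and a reward function `rew i` for each player. -/
structure ConcurrentGame (P S A : Type) [Fintype P] [Nonempty P] [Fintype S] [Nonempty S]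
    [Fintype A] [Nonempty A] : Type where
  act : P → S → Set A
  act_nonempty : ∀ i s, (act i s).Nonempty
  tr : S → (P → A) → S
  rew : P → S → ℝ

/-- A history (without its final state): the list of (state, action profile) pairs seen so far,
in chronological order. -/
abbrev Hist (P S A : Type) := List (S × (P → A))

variable {P S A : Type} [Fintype P] [Nonempty P] [Fintype S] [Nonempty S]
  [Fintype A] [Nonempty A] [DecidableEq P]

namespace ConcurrentGame

/-- A (randomised) strategy of player `i`: for every history `x` and current state `s`,
a probability distribution on actions, supported on the available actions `act i s`. -/
structure Strategy (G : ConcurrentGame P S A) (i : P) where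
  prob : Hist P S A → S → A → ℝ
  nonneg : ∀ x s a, 0 ≤ prob x s a
  sum_one : ∀ x s, ∑ a, prob x s a = 1
  supp : ∀ x s a, prob x s a ≠ 0 → a ∈ G.act i s

variable {G : ConcurrentGame P S A}

/-- A pure strategy: every prescribed distribution is degenerate. -/
def Strategy.IsPure {i : P} (σ : Strategy G i) : Prop := ∀ x s, ∃ a, σ.prob x s a = 1

/-- A stationary strategy: depends only on the current state. -/
def Strategy.IsStationary {i : P} (σ : Strategy G i) : Prop :=
  ∀ x y s, σ.prob x s = σ.prob y s

/-- A positional strategy: pure and stationary. -/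
def Strategy.IsPositional {i : P} (σ : Strategy G i) : Prop :=
  σ.IsPure ∧ σ.IsStationary

end ConcurrentGame

/-- A strategy profile: one strategy for each player. -/
abbrev Profile (G : ConcurrentGame P S A) := ∀ i : P, G.Strategy i

namespace ConcurrentGame

def IsPureProfile {G : ConcurrentGame P S A} (σ : Profile G) : Prop := ∀ i, (σ i).IsPure
def IsStationaryProfile {G : ConcurrentGame P S A} (σ : Profile G) : Prop :=
  ∀ i, (σ i).IsStationary
def IsPositionalProfile {G : ConcurrentGame P S A} (σ : Profile G) : Prop :=
  ∀ i, (σ i).IsPositional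

variable (G : ConcurrentGame P S A)

/-- An action profile is legal at `s` if each player's action is available to her. -/
def Legal (s : S) (a : P → A) : Prop := ∀ i, a i ∈ G.act i s

/-- A play of the game: an infinite sequence of (state, action profile) pairs such that every
action profile is legal and consecutive states are related by the transition function. -/
def IsPlay (π : ℕ → S × (P → A)) : Prop :=
  ∀ n, G.Legal (π n).1 (π n).2 ∧ (π (n + 1)).1 = G.tr (π n).1 (π n).2

/-- The limit-average (mean) payoff of player `i` along a sequence of states. -/
def payOf (i : P) (ss : ℕ → S) : ℝ :=
  Filter.liminf (fun n : ℕ => (∑ j ∈ Finset.range n, G.rew i (ss j)) / n) Filter.atTop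

/-- The probability that profile `a` is played after history `(x, s)` under profile `σ`. -/
def weight (σ : Profile G) (x : Hist P S A) (s : S) (a : P → A) : ℝ :=
  ∏ i, (σ i).prob x s (a i)

/-- cumulative distribution of `f` w.r.t. a fixed enumeration of action profiles. -/
def cum (f : (P → A) → ℝ) (k : ℕ) : ℝ :=
  ∑ b ∈ Finset.univ.filter (fun b => ((Fintype.equivFin (P → A)) b : ℕ) < k), f b

/-- Sample an action profile from the distribution `f` via inverse-cdf transform of `u ∈ [0,1)`. -/
def pick (f : (P → A) → ℝ) (u : ℝ) : P → A :=
  (Fintype.equivFin (P → A)).symm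
    (if h : (Finset.univ.filter
          (fun k : Fin (Fintype.card (P → A)) => cum (P := P) (A := A) f ((k : ℕ) + 1) ≤ u)).card
        < Fintype.card (P → A)
      then ⟨_, h⟩ else ⟨0, Fintype.card_pos⟩)

/-- The history induced from initial state `s₀` by a finite sequence of action profiles. -/
def histOf (s₀ : S) : List (P → A) → Hist P S A × S
  | [] => ([], s₀)
  | a :: l =>
    let h : Hist P S A × S := histOf (G.tr s₀ a) l
    ((s₀, a) :: h.1, h.2)

/-- The first `n` action profiles of the play run by profile `σ` from `s₀`,
driven by the source of randomness `u`. -/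
def samplePrefix (σ : Profile G) (s₀ : S) (u : USpace) : ℕ → List (P → A)
  | 0 => []
  | n + 1 =>
    let l : List (P → A) := samplePrefix σ s₀ u n
    let h : Hist P S A × S := G.histOf s₀ l
    l ++ [pick (G.weight σ h.1 h.2) (coordReal u n)]

/-- The state at time `n` of the play run by `σ` from `s₀` with randomness `u`. -/
def stateAt (σ : Profile G) (s₀ : S) (u : USpace) (n : ℕ) : S :=
  (G.histOf s₀ (G.samplePrefix σ s₀ u n)).2

/-- The expected (limit-average) payoff of player `i` under the strategy profile `σ`,
starting from `s₀`: the integral of the mean payoff over the induced measure on plays. -/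
def expPay (σ : Profile G) (s₀ : S) (i : P) : ℝ :=
  ∫ u, G.payOf i (G.stateAt σ s₀ u) ∂uHaar

/-- The probability that the play under `σ` from `s₀` ever visits the set `T` of states. -/
def probVisit (σ : Profile G) (s₀ : S) (T : Set S) : ℝ :=
  (uHaar {u | ∃ n, G.stateAt σ s₀ u n ∈ T}).toReal

/-- A Nash equilibrium: no player can increase her expected payoff by unilaterally
switching to another strategy. -/
def IsNash (σ : Profile G) (s₀ : S) : Prop :=
  ∀ (i : P) (τ : G.Strategy i),
    G.expPay (Function.update σ i τ) s₀ i ≤ G.expPay σ s₀ i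

/-- `pval i s`: the least payoff the coalition of all other players can inflict on player `i`
using pure strategy profiles, when the game starts at `s`. -/
def pval (i : P) (s : S) : ℝ :=
  ⨅ σ : {σ : Profile G // IsPureProfile σ}, ⨆ τ : G.Strategy i,
    G.expPay (Function.update σ.1 i τ) s i

/-- A state is terminal if every legal action profile leads back to it. -/
def Terminal (s : S) : Prop := ∀ a, G.Legal s a → G.tr s a = s

/-- A terminal-reward game: non-zero rewards occur only at terminal states. -/
def IsTerminalReward : Prop := ∀ (i : P) (s : S), ¬ G.Terminal s → G.rew i s = 0

/-- `a` is `z`-secure at `s`: `a` is legal at `s`, and whenever a single player `i` deviates to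
some available action `b`, the resulting state has `pval i ≤ z i`. -/
def zSecure (z : P → EReal) (s : S) (a : P → A) : Prop :=
  G.Legal s a ∧
    ∀ (i : P), ∀ b ∈ G.act i s, (G.pval i (G.tr s (Function.update a i b)) : EReal) ≤ z i

/-- The edge relation of the graph `G(z)`: an edge from `s` to `t` iff some `z`-secure action
profile at `s` leads to `t`. -/
def secureEdge (z : P → EReal) (s t : S) : Prop :=
  ∃ a, G.zSecure z s a ∧ G.tr s a = t

end ConcurrentGame

end

/-! ## The SAT game `G_φ` -/

noncomputable section

/-- A literal over `n` variables: `(true, i)` is the positive literal `Xᵢ` and `(false, i)`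
is the negative literal `¬Xᵢ`. -/
abbrev Lit (n : ℕ) := Bool × Fin n

/-- States of `G_φ`: clause states `C_j` (`j : Fin m`), literal states `(C_j, L)` and the
terminal state `⊥`. -/
abbrev SatState (n m : ℕ) := Fin m ⊕ (Fin m × Lit n) ⊕ Unit

/-- Actions of `G_φ`: at a clause state player 0 chooses a literal of the clause
(action `Sum.inl L`); at a literal state the controlling player either moves on to the next
clause (action `Sum.inr false`) or — at a negative literal state — quits to `⊥`
(action `Sum.inr true`). -/
abbrev SatAct (n : ℕ) := Lit n ⊕ Bool

instance {n m : ℕ} : Nonempty (SatState n m) := ⟨Sum.inr (Sum.inr ())⟩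
instance {n : ℕ} : Nonempty (SatAct n) := ⟨Sum.inr false⟩

/-- The turn-based game `G_φ` for a CNF formula `φ` with `m ≥ 1` clauses (given as nonempty
finite sets of literals) over `n` variables.  Players are `0, 1, …, n`.  Player 0 controls the
clause states, where she chooses a literal occurring in the clause; the literal state
`(C, L)` with `L = Xᵢ` or `L = ¬Xᵢ` is controlled by player `i`, who can move on to the next
clause state (cyclically), and from a negative literal state can also quit to the terminal
state `⊥`.  Player 0 gets reward 1 everywhere except at `⊥`, where she gets 0; player `i ≥ 1`
gets reward 1 everywhere except at the positive literal states `(C, Xᵢ)`, where she gets 0. -/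
def satGame (n m : ℕ) (hm : 0 < m) (φ : Fin m → Finset (Lit n))
    (hφ : ∀ j, (φ j).Nonempty) :
    ConcurrentGame (Fin (n + 1)) (SatState n m) (SatAct n) where
  act i s :=
    match s with
    | .inl j => if i = 0 then Sum.inl '' (φ j : Set (Lit n)) else {Sum.inr false}
    | .inr (.inl (_, (b, v))) =>
      if i = Fin.succ v ∧ b = false then {Sum.inr false, Sum.inr true} else {Sum.inr false}
    | .inr (.inr _) => {Sum.inr false}
  act_nonempty i s := by
    rcases s with j | ⟨j, b, v⟩ | u
    · dsimp only; split
      · exact ((Finset.coe_nonempty).mpr (hφ j)).image _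
      · exact Set.singleton_nonempty _
    · dsimp only; split
      · exact ⟨Sum.inr false, Set.mem_insert _ _⟩
      · exact Set.singleton_nonempty _
    · exact Set.singleton_nonempty _
  tr s a :=
    match s with
    | .inl j =>
      match a 0 with
      | .inl L => .inr (.inl (j, L))
      | .inr _ => .inl j
    | .inr (.inl (j, (b, v))) =>
      if b = false ∧ a (Fin.succ v) = Sum.inr true then .inr (.inr ())
      else .inl ⟨(j.val + 1) % m, Nat.mod_lt _ hm⟩
    | .inr (.inr u) => .inr (.inr u)
  rew i s :=
    if i = 0 then
      match s with
      | .inr (.inr _) => 0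
      | _ => 1
    else
      match s with
      | .inr (.inl (_, (b, v))) => if b = true ∧ Fin.succ v = i then 0 else 1
      | _ => 1

/-- `φ` is satisfiable: some assignment makes a literal of every clause true. -/
def SatSatisfiable (n m : ℕ) (φ : Fin m → Finset (Lit n)) : Prop :=
  ∃ α : Fin n → Bool, ∀ j, ∃ L ∈ φ j, α L.2 = L.1


/-! If `α` satisfies `φ`, let player 0 pick an `α`-true literal in every clause and nobody quit.
Player 0, and every player `v` with `α v = false`, then collects reward `1` at every step, while a
player with `α v = true` never has a choice, as `¬X_v` is never visited.

Conversely, in a pure equilibrium paying `1` to player 0 the play never reaches `⊥`, so it cycles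
through the clauses, picking a literal of each. A player `v` whose negative literal is visited
could quit there and get `1`, hence already has payoff `1`: she loses reward only at a set of
times of density zero. Setting `X_v` false exactly when `¬X_v` is visited satisfies `φ`, because
every visit of an unsatisfied clause would make one of these players lose reward, a positive
density of losses among finitely many players. -/

open Topology

section CesaroAvg

/-- `G.payOf i ss` is by definition `liminf (cesaroAvg fun j => G.rew i (ss j)) atTop`. -/
def cesaroAvg (r : ℕ → ℝ) (n : ℕ) : ℝ := (∑ j ∈ Finset.range n, r j) / n

variable {r : ℕ → ℝ}

lemma cesaroAvg_nonneg (h0 : ∀ t, 0 ≤ r t) (n : ℕ) : 0 ≤ cesaroAvg r n :=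
  div_nonneg (Finset.sum_nonneg fun j _ => h0 j) n.cast_nonneg

lemma cesaroAvg_le_one (h1 : ∀ t, r t ≤ 1) (n : ℕ) : cesaroAvg r n ≤ 1 := by
  rcases Nat.eq_zero_or_pos n with rfl | hn
  · simp [cesaroAvg]
  · rw [cesaroAvg, div_le_one (by exact_mod_cast hn)]
    simpa using Finset.sum_le_sum fun j (_ : j ∈ Finset.range n) => h1 j

lemma liminf_cesaroAvg_le_one (h0 : ∀ t, 0 ≤ r t) (h1 : ∀ t, r t ≤ 1) :
    liminf (cesaroAvg r) atTop ≤ 1 :=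
  liminf_le_of_frequently_le (Frequently.of_forall (cesaroAvg_le_one h1))
    (isBoundedUnder_of ⟨0, cesaroAvg_nonneg h0⟩)

lemma tendsto_cesaroAvg {c : ℝ} (h : Tendsto r atTop (𝓝 c)) :
    Tendsto (cesaroAvg r) atTop (𝓝 c) := by
  convert h.cesaro using 2 with n
  rw [cesaroAvg, div_eq_inv_mul]

lemma liminf_cesaroAvg_of_eventually_eq {c : ℝ} (h : ∀ᶠ t in atTop, r t = c) :
    liminf (cesaroAvg r) atTop = c :=
  (tendsto_cesaroAvg (tendsto_const_nhds.congr' (EventuallyEq.symm h))).liminf_eq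

lemma tendsto_cesaroAvg_of_one_le_liminf (h0 : ∀ t, 0 ≤ r t) (h1 : ∀ t, r t ≤ 1)
    (hl : 1 ≤ liminf (cesaroAvg r) atTop) : Tendsto (cesaroAvg r) atTop (𝓝 1) := by
  refine tendsto_order.2 ⟨fun a ha => ?_, fun a ha => ?_⟩
  · exact eventually_lt_of_lt_liminf (ha.trans_le hl)
      (isBoundedUnder_of ⟨0, cesaroAvg_nonneg h0⟩)
  · exact Eventually.of_forall fun n => (cesaroAvg_le_one h1 n).trans_lt ha

lemma cesaroAvg_sum {ι : Type*} (B : Finset ι) (f : ι → ℕ → ℝ) (n : ℕ) :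
    cesaroAvg (fun t => ∑ w ∈ B, f w t) n = ∑ w ∈ B, cesaroAvg (f w) n := by
  simp only [cesaroAvg, Finset.sum_div]
  exact Finset.sum_comm

lemma cesaroAvg_const_sub (c : ℝ) (n : ℕ) :
    cesaroAvg (fun t => c - r t) n = cesaroAvg (fun _ => c) n - cesaroAvg r n := by
  simp only [cesaroAvg, Finset.sum_sub_distrib, sub_div]

lemma sum_range_mul_add_le_sum_range_mul {f : ℕ → ℝ} (hf : ∀ t, 0 ≤ f t) {p q : ℕ}
    (hq : q < p) (K : ℕ) :
    ∑ k ∈ Finset.range K, f (p * k + q) ≤ ∑ t ∈ Finset.range (p * K), f t := by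
  induction K with
  | zero => simp
  | succ K ih =>
    rw [Finset.sum_range_succ, Nat.mul_succ, Finset.sum_range_add]
    gcongr
    exact Finset.single_le_sum (f := fun r => f (p * K + r)) (fun r _ => hf _)
      (Finset.mem_range.2 hq)

lemma exists_liminf_cesaroAvg_lt_one {ι : Type*} (B : Finset ι) (r : ι → ℕ → ℝ)
    (h0 : ∀ w t, 0 ≤ r w t) (h1 : ∀ w t, r w t ≤ 1) {p q : ℕ} (hq : q < p)
    (hzero : ∀ k, ∃ w ∈ B, r w (p * k + q) = 0) :
    ∃ w ∈ B, liminf (cesaroAvg (r w)) atTop < 1 := by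
  by_contra! hl
  set D : ℕ → ℝ := fun t => ∑ w ∈ B, (1 - r w t) with hD
  have hD0 : ∀ t, 0 ≤ D t := fun t => Finset.sum_nonneg fun w _ => sub_nonneg.2 (h1 w t)
  have hD1 : ∀ k, 1 ≤ D (p * k + q) := by
    intro k
    obtain ⟨w, hw, hzw⟩ := hzero k
    calc (1 : ℝ) = 1 - r w (p * k + q) := by rw [hzw, sub_zero]
      _ ≤ D (p * k + q) := Finset.single_le_sum (f := fun w => 1 - r w (p * k + q))
          (fun w _ => sub_nonneg.2 (h1 w _)) hw
  have hlim : Tendsto (cesaroAvg D) atTop (𝓝 0) := by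
    have hconst : Tendsto (cesaroAvg fun _ => (1 : ℝ)) atTop (𝓝 1) :=
      tendsto_cesaroAvg tendsto_const_nhds
    have := tendsto_finsetSum B fun w hw =>
      hconst.sub (tendsto_cesaroAvg_of_one_le_liminf (h0 w) (h1 w) (hl w hw))
    simp only [sub_self, Finset.sum_const_zero] at this
    refine this.congr fun n => ?_
    rw [hD, cesaroAvg_sum]
    exact Finset.sum_congr rfl fun w _ => (cesaroAvg_const_sub 1 n).symm
  have hp : (0 : ℝ) < p := by exact_mod_cast (Nat.zero_le q).trans_lt hq
  obtain ⟨N, hN⟩ := eventually_atTop.1 (hlim.eventually (gt_mem_nhds (one_div_pos.2 hp)))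
  have hlt := hN (p * (N + 1)) (by nlinarith)
  have hge : 1 / (p : ℝ) ≤ cesaroAvg D (p * (N + 1)) := by
    rw [cesaroAvg, Nat.cast_mul, le_div_iff₀ (by positivity)]
    calc 1 / (p : ℝ) * (p * ((N + 1 : ℕ) : ℝ))
        = ∑ _k ∈ Finset.range (N + 1), (1 : ℝ) := by
          field_simp; simp
      _ ≤ ∑ k ∈ Finset.range (N + 1), D (p * k + q) := Finset.sum_le_sum fun k _ => hD1 k
      _ ≤ _ := sum_range_mul_add_le_sum_range_mul hD0 hq _
  linarith

end CesaroAvg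

instance : MeasureTheory.IsProbabilityMeasure uHaar := by
  constructor
  have h0 : Measure.addHaar (G := USpace) Set.univ ≠ 0 :=
    (isOpen_univ.measure_pos _ Set.univ_nonempty).ne'
  have h1 : Measure.addHaar (G := USpace) Set.univ ≠ ⊤ := isCompact_univ.measure_lt_top.ne
  simp only [uHaar, Measure.smul_apply, smul_eq_mul]
  exact ENNReal.inv_mul_cancel h0 h1

lemma coordReal_mem (u : USpace) (n : ℕ) : coordReal u n ∈ Set.Ico (0 : ℝ) 1 := by
  simpa [coordReal] using ((AddCircle.equivIco (1 : ℝ) 0) (u n)).2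

namespace ConcurrentGame

section Sampling

variable {P A : Type} [Fintype P] [Fintype A] [DecidableEq P] {f : (P → A) → ℝ} {a : P → A}

lemma cum_of_point_mass (ha : f a = 1) (hf : ∀ b ≠ a, f b = 0) (k : ℕ) :
    cum f k = if ((Fintype.equivFin (P → A)) a : ℕ) < k then 1 else 0 := by
  rw [cum, Finset.sum_filter, Finset.sum_eq_single a (fun b _ hb => by simp [hf b hb])
    (fun h => absurd (Finset.mem_univ a) h), ha]

lemma pick_of_point_mass [Nonempty A] (ha : f a = 1) (hf : ∀ b ≠ a, f b = 0) {u : ℝ}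
    (hu : u ∈ Set.Ico (0 : ℝ) 1) : pick f u = a := by
  have hfilter : Finset.univ.filter (fun k : Fin (Fintype.card (P → A)) => cum f (k + 1) ≤ u)
      = Finset.Iio (Fintype.equivFin (P → A) a) := by
    ext k
    simp only [Finset.mem_filter, Finset.mem_univ, true_and, Finset.mem_Iio,
      cum_of_point_mass ha hf]
    split_ifs with h
    · exact iff_of_false (not_le.2 hu.2) (by rw [Fin.lt_def]; omega)
    · exact iff_of_true hu.1 (by rw [Fin.lt_def]; omega)
  rw [pick, dif_pos (by rw [hfilter, Fin.card_Iio]; exact (Fintype.equivFin (P → A) a).2)]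
  simp only [hfilter, Fin.card_Iio, Fin.eta, Equiv.symm_apply_apply]

end Sampling

variable {P S A : Type} [Fintype P] [Nonempty P] [Fintype S] [Nonempty S]
  [Fintype A] [Nonempty A]

section Strategies

variable {G : ConcurrentGame P S A} {i : P}

lemma Strategy.prob_eq_zero_of_prob_eq_one (σ : G.Strategy i) {x : Hist P S A} {s : S}
    {a b : A} (ha : σ.prob x s a = 1) (hb : b ≠ a) : σ.prob x s b = 0 := by
  classical
  have hsum := σ.sum_one x s
  rw [← Finset.add_sum_erase _ _ (Finset.mem_univ a), ha, add_eq_left] at hsum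
  exact (Finset.sum_eq_zero_iff_of_nonneg fun c _ => σ.nonneg x s c).1 hsum b
    (Finset.mem_erase.2 ⟨hb, Finset.mem_univ b⟩)

lemma Strategy.prob_eq_one_of_act_eq_singleton (σ : G.Strategy i) {s : S} {a : A}
    (hact : G.act i s = {a}) (x : Hist P S A) : σ.prob x s a = 1 := by
  have hzero : ∀ b, b ≠ a → σ.prob x s b = 0 := fun b hb => by
    by_contra h
    simpa [hact, hb] using σ.supp x s b h
  simpa [Finset.sum_eq_single a fun b _ hb => hzero b hb] using σ.sum_one x s

def posStrat (G : ConcurrentGame P S A) (i : P) (f : S → A) (hf : ∀ s, f s ∈ G.act i s) :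
    G.Strategy i :=
  letI := Classical.decEq A
  { prob := fun _ s a => if a = f s then 1 else 0
    nonneg := fun _ s a => by split_ifs <;> norm_num
    sum_one := fun _ s => by simp
    supp := fun _ s a h => by
      by_contra ha
      simp at h
      exact ha (h ▸ hf s) }

lemma posStrat_prob {f : S → A} (hf : ∀ s, f s ∈ G.act i s) (x : Hist P S A) (s : S) :
    (posStrat G i f hf).prob x s (f s) = 1 := by
  simp [posStrat]

lemma posStrat_isPure {f : S → A} (hf : ∀ s, f s ∈ G.act i s) : (posStrat G i f hf).IsPure :=
  fun x s => ⟨f s, posStrat_prob hf x s⟩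

end Strategies

abbrev Choice (P S A : Type) := Hist P S A → S → P → A

variable (G : ConcurrentGame P S A)

def run (c : Choice P S A) (s₀ : S) : ℕ → Hist P S A × S
  | 0 => ([], s₀)
  | n + 1 =>
    let h := run c s₀ n
    (h.1 ++ [(h.2, c h.1 h.2)], G.tr h.2 (c h.1 h.2))

def Follows (σ : Profile G) (c : Choice P S A) (s₀ : S) : Prop :=
  ∀ n i, (σ i).prob (G.run c s₀ n).1 (G.run c s₀ n).2
    (c (G.run c s₀ n).1 (G.run c s₀ n).2 i) = 1

variable {G}

lemma run_succ_snd (c : Choice P S A) (s₀ : S) (n : ℕ) :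
    (G.run c s₀ (n + 1)).2 = G.tr (G.run c s₀ n).2 (c (G.run c s₀ n).1 (G.run c s₀ n).2) :=
  rfl

lemma follows_of_forall {σ : Profile G} {c : Choice P S A}
    (h : ∀ x s i, (σ i).prob x s (c x s i) = 1) (s₀ : S) : G.Follows σ c s₀ :=
  fun _ _ => h _ _ _

lemma run_eq_of_agree {c c' : Choice P S A} {s₀ : S} {T : ℕ}
    (h : ∀ t < T,
      c' (G.run c s₀ t).1 (G.run c s₀ t).2 = c (G.run c s₀ t).1 (G.run c s₀ t).2) :
    ∀ t ≤ T, G.run c' s₀ t = G.run c s₀ t := by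
  intro t ht
  induction t with
  | zero => rfl
  | succ t ih => simp only [run, ih (by omega), h t (by omega)]

lemma run_snd_eq_of_absorbing {c : Choice P S A} {s₀ s : S}
    (hs : ∀ a, G.tr s a = s) {t : ℕ} (ht : (G.run c s₀ t).2 = s) :
    ∀ t' ≥ t, (G.run c s₀ t').2 = s := by
  intro t' h
  induction t', h using Nat.le_induction with
  | base => exact ht
  | succ t' _ ih => rw [run_succ_snd, ih, hs]

lemma histOf_append (s₀ : S) (l : List (P → A)) (a : P → A) :
    G.histOf s₀ (l ++ [a])
      = ((G.histOf s₀ l).1 ++ [((G.histOf s₀ l).2, a)], G.tr (G.histOf s₀ l).2 a) := by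
  induction l generalizing s₀ with
  | nil => simp [histOf]
  | cons b l ih => simp [histOf, ih]

lemma weight_self (σ : Profile G) {x : Hist P S A} {s : S} {a : P → A}
    (ha : ∀ i, (σ i).prob x s (a i) = 1) : G.weight σ x s a = 1 := by
  simp [weight, ha]

lemma weight_eq_zero_of_ne (σ : Profile G) {x : Hist P S A} {s : S} {a b : P → A}
    (ha : ∀ i, (σ i).prob x s (a i) = 1) (hb : b ≠ a) : G.weight σ x s b = 0 := by
  obtain ⟨i, hi⟩ := Function.ne_iff.1 hb
  exact Finset.prod_eq_zero (Finset.mem_univ i) ((σ i).prob_eq_zero_of_prob_eq_one (ha i) hi)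

lemma histOf_samplePrefix [DecidableEq P] {σ : Profile G} {c : Choice P S A} {s₀ : S}
    (hσ : G.Follows σ c s₀) (u : USpace) (n : ℕ) :
    G.histOf s₀ (G.samplePrefix σ s₀ u n) = G.run c s₀ n := by
  induction n with
  | zero => rfl
  | succ n ih =>
    rw [samplePrefix, histOf_append, ih,
      pick_of_point_mass (weight_self σ (hσ n))
        (fun b => weight_eq_zero_of_ne σ (hσ n)) (coordReal_mem u n)]
    rfl

lemma expPay_eq_payOf_run [DecidableEq P] {σ : Profile G} {c : Choice P S A}
    {s₀ : S} (hσ : G.Follows σ c s₀) (i : P) :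
    G.expPay σ s₀ i = G.payOf i fun n => (G.run c s₀ n).2 := by
  have hstate : ∀ u, G.stateAt σ s₀ u = fun n => (G.run c s₀ n).2 := fun u =>
    funext fun n => congrArg Prod.snd (histOf_samplePrefix hσ u n)
  simp [expPay, hstate]

lemma payOf_eq_of_eventually_rew_eq (i : P) {ss : ℕ → S} {c : ℝ}
    (h : ∀ᶠ t in atTop, G.rew i (ss t) = c) : G.payOf i ss = c :=
  liminf_cesaroAvg_of_eventually_eq h

lemma expPay_le_one [DecidableEq P] (σ : Profile G) (s₀ : S) (i : P)
    (h0 : ∀ s, 0 ≤ G.rew i s) (h1 : ∀ s, G.rew i s ≤ 1) : G.expPay σ s₀ i ≤ 1 := by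
  have hpay : ∀ ss, G.payOf i ss ≤ 1 := fun ss =>
    liminf_cesaroAvg_le_one (fun t => h0 (ss t)) (fun t => h1 (ss t))
  by_cases hI : Integrable (fun u => G.payOf i (G.stateAt σ s₀ u)) uHaar
  · calc G.expPay σ s₀ i ≤ ∫ _u, (1 : ℝ) ∂uHaar :=
          integral_mono hI (integrable_const 1) fun u => hpay _
      _ = 1 := by simp
  · rw [expPay, integral_undef hI]
    exact zero_le_one

lemma expPay_update_le_of_rew_eq_one [DecidableEq P] {σ : Profile G}
    {c : Choice P S A} {s₀ : S} (hσ : G.Follows σ c s₀) {i : P}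
    (h0 : ∀ s, 0 ≤ G.rew i s) (h1 : ∀ s, G.rew i s ≤ 1)
    (h : ∀ t, G.rew i (G.run c s₀ t).2 = 1) (τ : G.Strategy i) :
    G.expPay (Function.update σ i τ) s₀ i ≤ G.expPay σ s₀ i := by
  rw [expPay_eq_payOf_run hσ, payOf_eq_of_eventually_rew_eq i (Eventually.of_forall h)]
  exact expPay_le_one _ _ _ h0 h1

lemma Follows.update [DecidableEq P] {σ : Profile G} {c : Choice P S A} {s₀ : S}
    (hσ : G.Follows σ c s₀) {i : P} (τ : G.Strategy i)
    (hact : ∀ t, G.act i (G.run c s₀ t).2 = {c (G.run c s₀ t).1 (G.run c s₀ t).2 i}) :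
    G.Follows (Function.update σ i τ) c s₀ := by
  intro t j
  rcases eq_or_ne j i with rfl | hj
  · rw [Function.update_self]
    exact τ.prob_eq_one_of_act_eq_singleton (hact t) _
  · rw [Function.update_of_ne hj]
    exact hσ t j

def pureChoice {σ : Profile G} (hσ : IsPureProfile σ) (x : Hist P S A) (s : S) : P → A :=
  fun i => Classical.choose (hσ i x s)

lemma pureChoice_prob {σ : Profile G} (hσ : IsPureProfile σ) (x : Hist P S A) (s : S) (i : P) :
    (σ i).prob x s (pureChoice hσ x s i) = 1 :=
  Classical.choose_spec (hσ i x s)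

lemma follows_pureChoice {σ : Profile G} (hσ : IsPureProfile σ) (s₀ : S) :
    G.Follows σ (pureChoice hσ) s₀ :=
  follows_of_forall (pureChoice_prob hσ) s₀

lemma pureChoice_mem {σ : Profile G} (hσ : IsPureProfile σ) (x : Hist P S A) (s : S) (i : P) :
    pureChoice hσ x s i ∈ G.act i s :=
  (σ i).supp x s _ (by rw [pureChoice_prob]; exact one_ne_zero)

end ConcurrentGame

abbrev SatState.lit {n m : ℕ} (j : Fin m) (L : Lit n) : SatState n m := Sum.inr (Sum.inl (j, L))

abbrev SatState.bot {n m : ℕ} : SatState n m := Sum.inr (Sum.inr ())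

/-- The clause visited at stage `k` of a play of `G_φ` that never quits. -/
def clauseAt {m : ℕ} (hm : 0 < m) (k : ℕ) : Fin m := ⟨k % m, Nat.mod_lt k hm⟩

lemma clauseAt_mul_add {m : ℕ} (hm : 0 < m) (K : ℕ) (j : Fin m) : clauseAt hm (m * K + j) = j :=
  Fin.ext (by simp [clauseAt, Nat.mod_eq_of_lt j.2])

lemma clauseAt_succ {m : ℕ} (hm : 0 < m) (k : ℕ) :
    clauseAt hm ((clauseAt hm k : ℕ) + 1) = clauseAt hm (k + 1) :=
  Fin.ext (Nat.mod_add_mod k m 1)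

namespace SatGame

open ConcurrentGame SatState

variable {n m : ℕ} {hm : 0 < m} {φ : Fin m → Finset (Lit n)} {hφ : ∀ j, (φ j).Nonempty}

local notation "Gφ" => satGame n m hm φ hφ

lemma rew_nonneg (i : Fin (n + 1)) (s : SatState n m) : 0 ≤ (Gφ).rew i s := by
  simp only [satGame]
  rcases s with j | ⟨j, b, v⟩ | u <;> dsimp only <;> split_ifs <;> norm_num

lemma rew_le_one (i : Fin (n + 1)) (s : SatState n m) : (Gφ).rew i s ≤ 1 := by
  simp only [satGame]
  rcases s with j | ⟨j, b, v⟩ | u <;> dsimp only <;> split_ifs <;> norm_num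

lemma rew_zero_bot : (Gφ).rew 0 bot = 0 := rfl

lemma rew_succ_bot (v : Fin n) : (Gφ).rew v.succ bot = 1 := by
  simp [satGame, Fin.succ_ne_zero]

lemma rew_succ_clause (v : Fin n) (j : Fin m) : (Gφ).rew v.succ (.inl j) = 1 := by
  simp [satGame, Fin.succ_ne_zero]

lemma rew_succ_lit (v : Fin n) (j : Fin m) (L : Lit n) :
    (Gφ).rew v.succ (lit j L) = if L = (true, v) then 0 else 1 := by
  obtain ⟨b, w⟩ := L
  simp [satGame, Fin.succ_ne_zero]

lemma act_zero_clause (j : Fin m) : (Gφ).act 0 (.inl j) = Sum.inl '' (φ j : Set (Lit n)) := by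
  simp [satGame]

lemma act_succ_of_ne {v : Fin n} {s : SatState n m} (hs : ∀ j, s ≠ lit j (false, v)) :
    (Gφ).act v.succ s = {Sum.inr false} := by
  rcases s with j | ⟨j, b, w⟩ | u
  · simp [satGame, Fin.succ_ne_zero]
  · simp only [satGame, Fin.succ_inj]
    rw [if_neg]
    rintro ⟨rfl, rfl⟩
    exact hs j rfl
  · rfl

lemma inr_false_mem_act_succ (v : Fin n) (s : SatState n m) :
    Sum.inr false ∈ (Gφ).act v.succ s := by
  rcases s with j | ⟨j, b, w⟩ | u
  · simp [satGame, Fin.succ_ne_zero]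
  · simp only [satGame]
    split_ifs <;> simp
  · exact rfl

lemma tr_bot (a : Fin (n + 1) → SatAct n) : (Gφ).tr bot a = bot := rfl

lemma tr_clause {a : Fin (n + 1) → SatAct n} (j : Fin m) {L : Lit n} (h : a 0 = Sum.inl L) :
    (Gφ).tr (.inl j) a = lit j L := by
  simp [satGame, h]

lemma tr_lit_quit {a : Fin (n + 1) → SatAct n} (j : Fin m) {w : Fin n}
    (h : a w.succ = Sum.inr true) : (Gφ).tr (lit j (false, w)) a = bot := by
  simp [satGame, h]

lemma tr_lit_of_ne_quit {a : Fin (n + 1) → SatAct n} (j : Fin m) {L : Lit n}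
    (h : a L.2.succ ≠ Sum.inr true) : (Gφ).tr (lit j L) a = .inl (clauseAt hm (j + 1)) := by
  obtain ⟨b, w⟩ := L
  simp [satGame, h, clauseAt]

lemma tr_lit_eq_bot_or (j : Fin m) (L : Lit n) (a : Fin (n + 1) → SatAct n) :
    (Gφ).tr (lit j L) a = bot ∨ (Gφ).tr (lit j L) a = .inl (clauseAt hm (j + 1)) := by
  obtain ⟨b, w⟩ := L
  by_cases h : b = false ∧ a w.succ = Sum.inr true
  · obtain ⟨rfl, h⟩ := h
    exact Or.inl (tr_lit_quit j h)
  · right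
    simp [satGame, h, clauseAt]

section Forward

variable (Lsel : Fin m → Lit n)

def literalChoice (s : SatState n m) (i : Fin (n + 1)) : SatAct n :=
  match s with
  | .inl j => if i = 0 then .inl (Lsel j) else .inr false
  | _ => .inr false

lemma literalChoice_succ (v : Fin n) (s : SatState n m) :
    literalChoice Lsel s v.succ = .inr false := by
  rcases s with j | _ | _ <;> simp [literalChoice, Fin.succ_ne_zero]

variable {Lsel}

lemma literalChoice_mem (hL : ∀ j, Lsel j ∈ φ j) (i : Fin (n + 1)) (s : SatState n m) :
    literalChoice Lsel s i ∈ (Gφ).act i s := by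
  rcases Fin.eq_zero_or_eq_succ i with rfl | ⟨v, rfl⟩
  · rcases s with j | ⟨j, b, w⟩ | u
    · rw [act_zero_clause]
      exact ⟨Lsel j, hL j, rfl⟩
    · simp [satGame, literalChoice, (Fin.succ_ne_zero w).symm]
    · exact rfl
  · rw [literalChoice_succ]
    exact inr_false_mem_act_succ v s

variable (hm hφ) in
def literalProfile (hL : ∀ j, Lsel j ∈ φ j) : Profile Gφ :=
  fun i => posStrat Gφ i (fun s => literalChoice Lsel s i) (literalChoice_mem hL i)

lemma literalProfile_isPure (hL : ∀ j, Lsel j ∈ φ j) :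
    IsPureProfile (literalProfile hm hφ hL) :=
  fun _ => posStrat_isPure _

lemma literalProfile_follows (hL : ∀ j, Lsel j ∈ φ j) (s₀ : SatState n m) :
    (Gφ).Follows (literalProfile hm hφ hL) (fun _ s => literalChoice Lsel s) s₀ :=
  follows_of_forall (fun _ _ _ => posStrat_prob _ _ _) s₀

lemma run_literalChoice (j₀ : Fin m) (t : ℕ) :
    ∃ j, ((Gφ).run (fun _ s => literalChoice Lsel s) (.inl j₀) t).2 = .inl j ∨
      ((Gφ).run (fun _ s => literalChoice Lsel s) (.inl j₀) t).2 = lit j (Lsel j) := by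
  induction t with
  | zero => exact ⟨j₀, Or.inl rfl⟩
  | succ t ih =>
    obtain ⟨j, h | h⟩ := ih <;> rw [run_succ_snd, h]
    · exact ⟨j, Or.inr (tr_clause j (by simp [literalChoice]))⟩
    · exact ⟨_, Or.inl (tr_lit_of_ne_quit j (by simp [literalChoice]))⟩

theorem exists_pure_nash_of_satisfiable (h : SatSatisfiable n m φ) :
    ∃ σ : Profile Gφ, IsPureProfile σ ∧ (Gφ).IsNash σ (.inl ⟨0, hm⟩) ∧
      1 ≤ (Gφ).expPay σ (.inl ⟨0, hm⟩) 0 := by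
  obtain ⟨α, hα⟩ := h
  choose Lsel hLmem hLtrue using hα
  set c : Choice (Fin (n + 1)) (SatState n m) (SatAct n) :=
    fun _ s => literalChoice Lsel s
  have hσ : (Gφ).Follows (literalProfile hm hφ hLmem) c (.inl ⟨0, hm⟩) :=
    literalProfile_follows hLmem _
  have hplay : ∀ t, ∃ j, ((Gφ).run c (.inl ⟨0, hm⟩) t).2 = .inl j ∨
      ((Gφ).run c (.inl ⟨0, hm⟩) t).2 = lit j (Lsel j) :=
    run_literalChoice ⟨0, hm⟩
  have hrew0 : ∀ t, (Gφ).rew 0 ((Gφ).run c (.inl ⟨0, hm⟩) t).2 = 1 := fun t => by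
    obtain ⟨j, h | h⟩ := hplay t <;> rw [h] <;> rfl
  refine ⟨literalProfile hm hφ hLmem, literalProfile_isPure hLmem, fun i τ => ?_, ?_⟩
  · rcases Fin.eq_zero_or_eq_succ i with rfl | ⟨v, rfl⟩
    · exact expPay_update_le_of_rew_eq_one hσ (rew_nonneg 0) (rew_le_one 0) hrew0 τ
    cases hv : α v
    · -- only true literals are chosen, so `X_v` is never visited
      refine expPay_update_le_of_rew_eq_one hσ (rew_nonneg _) (rew_le_one _) (fun t => ?_) τ
      obtain ⟨j, h | h⟩ := hplay t <;> rw [h]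
      · exact rew_succ_clause v j
      · rw [rew_succ_lit, if_neg]
        intro hj
        simpa [hj, hv] using hLtrue j
    · -- `¬X_v` is never visited, so player `v` never has a choice
      refine le_of_eq ?_
      rw [expPay_eq_payOf_run hσ, expPay_eq_payOf_run (hσ.update τ fun t => ?_)]
      change _ = {literalChoice Lsel _ v.succ}
      rw [literalChoice_succ]
      refine act_succ_of_ne fun j h => ?_
      obtain ⟨j', h' | h'⟩ := hplay t <;> rw [h'] at h
      · cases h
      · obtain ⟨rfl, hj⟩ : j' = j ∧ Lsel j' = (false, v) := by simpa using h
        simpa [hj, hv] using hLtrue j'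
  · rw [expPay_eq_payOf_run hσ, payOf_eq_of_eventually_rew_eq 0 (Eventually.of_forall hrew0)]

end Forward

section Backward

variable {c : Choice (Fin (n + 1)) (SatState n m) (SatAct n)}

lemma run_ne_bot_of_one_le_payOf {s₀ : SatState n m}
    (h : 1 ≤ (Gφ).payOf 0 fun t => ((Gφ).run c s₀ t).2) (t : ℕ) :
    ((Gφ).run c s₀ t).2 ≠ bot := by
  intro ht
  have hzero : (Gφ).payOf 0 (fun t => ((Gφ).run c s₀ t).2) = 0 :=
    payOf_eq_of_eventually_rew_eq 0 (eventually_atTop.2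
      ⟨t, fun t' h => by rw [run_snd_eq_of_absorbing tr_bot ht t' h, rew_zero_bot]⟩)
  linarith

lemma run_odd_eq_lit (hc : ∀ x s i, c x s i ∈ (Gφ).act i s)
    (hbot : ∀ t, ((Gφ).run c (.inl ⟨0, hm⟩) t).2 ≠ bot) (k : ℕ) :
    ∃ L ∈ φ (clauseAt hm k),
      ((Gφ).run c (.inl ⟨0, hm⟩) (2 * k + 1)).2 = lit (clauseAt hm k) L := by
  have hodd : ∀ k, ((Gφ).run c (.inl ⟨0, hm⟩) (2 * k)).2 = .inl (clauseAt hm k) →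
      ∃ L ∈ φ (clauseAt hm k),
        ((Gφ).run c (.inl ⟨0, hm⟩) (2 * k + 1)).2 = lit (clauseAt hm k) L := by
    intro k hk
    have hmem := hc ((Gφ).run c (.inl ⟨0, hm⟩) (2 * k)).1
      ((Gφ).run c (.inl ⟨0, hm⟩) (2 * k)).2 0
    rw [hk, act_zero_clause] at hmem
    obtain ⟨L, hL, hLc⟩ := hmem
    exact ⟨L, hL, by rw [run_succ_snd, hk, tr_clause _ hLc.symm]⟩
  suffices heven : ∀ k, ((Gφ).run c (.inl ⟨0, hm⟩) (2 * k)).2 = .inl (clauseAt hm k) from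
    hodd k (heven k)
  intro k
  induction k with
  | zero => exact congrArg Sum.inl (Fin.ext (Nat.zero_mod m).symm)
  | succ k ih =>
    obtain ⟨L, -, hL⟩ := hodd k ih
    have hnext := tr_lit_eq_bot_or (hm := hm) (hφ := hφ) (clauseAt hm k) L
      (c ((Gφ).run c (.inl ⟨0, hm⟩) (2 * k + 1)).1
        ((Gφ).run c (.inl ⟨0, hm⟩) (2 * k + 1)).2)
    rw [← hL, ← run_succ_snd, clauseAt_succ] at hnext
    exact hnext.resolve_left (hbot _)

def quitAct (v : Fin n) : SatState n m → SatAct n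
  | .inr (.inl (_, (false, w))) => if w = v then .inr true else .inr false
  | _ => .inr false

lemma quitAct_mem (v : Fin n) (s : SatState n m) : quitAct v s ∈ (Gφ).act v.succ s := by
  rcases s with j | ⟨j, ⟨_ | _, w⟩⟩ | u
  · exact inr_false_mem_act_succ v _
  · by_cases hw : w = v
    · subst hw
      simp [quitAct, satGame]
    · simpa [quitAct, hw] using inr_false_mem_act_succ (hm := hm) (hφ := hφ) v (lit j (false, w))
  · exact inr_false_mem_act_succ v _
  · exact inr_false_mem_act_succ v _

lemma quitAct_of_ne {v : Fin n} {s : SatState n m} (hs : ∀ j, s ≠ lit j (false, v)) :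
    quitAct v s = .inr false := by
  rcases s with j | ⟨j, ⟨_ | _, w⟩⟩ | u <;> simp only [quitAct]
  rw [if_neg]
  rintro rfl
  exact hs j rfl

lemma one_le_payOf_of_visit_neg {σ : Profile Gφ} (hσ : IsPureProfile σ) {s₀ : SatState n m}
    (hnash : (Gφ).IsNash σ s₀) {v : Fin n}
    (hvisit : ∃ t j, ((Gφ).run (pureChoice hσ) s₀ t).2 = lit j (false, v)) :
    1 ≤ (Gφ).payOf v.succ fun t => ((Gφ).run (pureChoice hσ) s₀ t).2 := by
  classical
  obtain ⟨t₀, ⟨j₀, hj₀⟩, hmin⟩ :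
      ∃ t₀, (∃ j, ((Gφ).run (pureChoice hσ) s₀ t₀).2 = lit j (false, v)) ∧
        ∀ t < t₀, ∀ j, ((Gφ).run (pureChoice hσ) s₀ t).2 ≠ lit j (false, v) :=
    ⟨Nat.find hvisit, Nat.find_spec hvisit, fun t ht j hj => Nat.find_min hvisit ht ⟨j, hj⟩⟩
  set τ := posStrat (Gφ) v.succ (quitAct v) (quitAct_mem v)
  set c' : Choice (Fin (n + 1)) (SatState n m) (SatAct n) :=
    fun x s => Function.update (pureChoice hσ x s) v.succ (quitAct v s) with hc'
  have hfollow : (Gφ).Follows (Function.update σ v.succ τ) c' s₀ := by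
    refine follows_of_forall (fun x s i => ?_) s₀
    rcases eq_or_ne i v.succ with rfl | hi
    · simpa [hc'] using posStrat_prob (quitAct_mem v) x s
    · simpa [hc', Function.update_of_ne hi] using pureChoice_prob hσ x s i
  have hagree : ∀ t ≤ t₀, (Gφ).run c' s₀ t = (Gφ).run (pureChoice hσ) s₀ t := by
    refine run_eq_of_agree fun t ht => funext fun i => ?_
    rcases eq_or_ne i v.succ with rfl | hi
    · have hact := act_succ_of_ne (hm := hm) (hφ := hφ) (hmin t ht)
      have hmem := pureChoice_mem hσ ((Gφ).run (pureChoice hσ) s₀ t).1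
        ((Gφ).run (pureChoice hσ) s₀ t).2 v.succ
      rw [hact] at hmem
      simp [hc', quitAct_of_ne (hmin t ht), Set.mem_singleton_iff.1 hmem]
    · simp [hc', Function.update_of_ne hi]
  have hquit : ((Gφ).run c' s₀ (t₀ + 1)).2 = bot := by
    rw [run_succ_snd, hagree t₀ le_rfl, hj₀]
    exact tr_lit_quit j₀ (by simp [hc', quitAct])
  have hdev := hnash v.succ τ
  rwa [expPay_eq_payOf_run hfollow, expPay_eq_payOf_run (follows_pureChoice hσ s₀),
    payOf_eq_of_eventually_rew_eq _ (eventually_atTop.2 ⟨t₀ + 1, fun t ht => by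
      rw [run_snd_eq_of_absorbing tr_bot hquit t ht, rew_succ_bot]⟩)] at hdev

theorem satisfiable_of_pure_nash {σ : Profile Gφ} (hσ : IsPureProfile σ)
    (hnash : (Gφ).IsNash σ (.inl ⟨0, hm⟩))
    (hpay : 1 ≤ (Gφ).expPay σ (.inl ⟨0, hm⟩) 0) :
    SatSatisfiable n m φ := by
  classical
  set π : ℕ → SatState n m := fun t => ((Gφ).run (pureChoice hσ) (.inl ⟨0, hm⟩) t).2
  rw [expPay_eq_payOf_run (follows_pureChoice hσ _)] at hpay
  choose L hLmem hL using run_odd_eq_lit (pureChoice_mem hσ) (run_ne_bot_of_one_le_payOf hpay)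
  set α : Fin n → Bool := fun v => decide (¬∃ t j, π t = lit j (false, v)) with hα
  refine ⟨α, fun j => ?_⟩
  by_contra! hj
  have hbad : ∀ K, ∃ w ∈ Finset.univ.filter (α · = false),
      (Gφ).rew w.succ (π (2 * m * K + (2 * j + 1))) = 0 := by
    intro K
    have hk : π (2 * (m * K + j) + 1) = lit j (L (m * K + j)) := by
      simpa only [clauseAt_mul_add] using hL (m * K + j)
    have hmem : L (m * K + j) ∈ φ j := by simpa only [clauseAt_mul_add] using hLmem (m * K + j)
    rw [show 2 * m * K + (2 * j + 1) = 2 * (m * K + j) + 1 by ring, hk]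
    generalize L (m * K + j) = Lk at hk hmem
    obtain ⟨_ | _, w⟩ := Lk
    · have hnv : ∀ t j', π t ≠ lit j' (false, w) := by simpa [hα] using hj _ hmem
      exact absurd hk (hnv _ _)
    · exact ⟨w, by simpa [hα] using hj _ hmem, by simp [rew_succ_lit]⟩
  obtain ⟨w, hw, hlt⟩ :=
    exists_liminf_cesaroAvg_lt_one _ (fun (w : Fin n) t => (Gφ).rew w.succ (π t))
    (fun _ _ => rew_nonneg _ _) (fun _ _ => rew_le_one _ _) (by omega : 2 * j + 1 < 2 * m) hbad
  exact hlt.not_ge (one_le_payOf_of_visit_neg hσ hnash (by simpa [hα] using hw))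

end Backward

end SatGame

/-- For a CNF formula `φ = C₁ ∧ … ∧ C_m` with `m ≥ 1` and nonempty clauses: `φ` is satisfiable
iff `(G_φ, C₁)` has a pure Nash equilibrium with expected payoff ≥ 1 for player 0. -/
theorem satisfiable_iff_pure_nash (n m : ℕ) (hm : 0 < m)
    (φ : Fin m → Finset (Lit n)) (hφ : ∀ j, (φ j).Nonempty) :
    SatSatisfiable n m φ ↔
      ∃ σ : Profile (satGame n m hm φ hφ), ConcurrentGame.IsPureProfile σ ∧
        (satGame n m hm φ hφ).IsNash σ (Sum.inl ⟨0, hm⟩) ∧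
        1 ≤ (satGame n m hm φ hφ).expPay σ (Sum.inl ⟨0, hm⟩) 0 :=
  ⟨SatGame.exists_pure_nash_of_satisfiable,
    fun ⟨_, hσ, hnash, hpay⟩ => SatGame.satisfiable_of_pure_nash hσ hnash hpay⟩

end
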